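/- arXiv:2512.15464 — 9 statements merged into one kernel-verified Lean document; each statement's English description precedes it below -/
import Mathlib

section
/- Let n ≥ 1 and let Ω ⊆ EuclideanSpace ℝ (Fin n) be a nonempty compact convex set. Let f : EuclideanSpace ℝ (Fin n) → ℝ be differentiable at every point of Ω and convex on Ω, and let L ≥ 0. If ‖fderiv ℝ f y‖ ≤ L for every y in the frontier of Ω, then ‖fderiv ℝ f x‖ ≤ L for every x ∈ Ω. -/
open Set

/-- Key directional estimate: at an interior point, the directional derivative in any
direction is bounded by `L * ‖v‖`, because following the ray we hit a frontier point
where the derivative dominates by convexity. -/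
lemma dir_deriv_le
    {n : ℕ} {Ω : Set (EuclideanSpace ℝ (Fin n))}
    (hΩc : IsCompact Ω) (hΩconv : Convex ℝ Ω)
    {f : EuclideanSpace ℝ (Fin n) → ℝ}
    (hdiff : ∀ x ∈ Ω, DifferentiableAt ℝ f x)
    (hconv : ConvexOn ℝ Ω f)
    {L : ℝ} (hL : 0 ≤ L)
    (hbd : ∀ y ∈ frontier Ω, ‖fderiv ℝ f y‖ ≤ L)
    {x : EuclideanSpace ℝ (Fin n)} (hx : x ∈ interior Ω)
    (v : EuclideanSpace ℝ (Fin n)) :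
    fderiv ℝ f x v ≤ L * ‖v‖ := by
  rcases eq_or_ne v 0 with rfl | hv
  · simp
  have hxΩ : x ∈ Ω := interior_subset hx
  -- the set of admissible parameters along the ray
  set S : Set ℝ := {t : ℝ | 0 ≤ t ∧ x + t • v ∈ Ω} with hS
  have hcont : Continuous (fun t : ℝ => x + t • v) := by continuity
  have hSclosed : IsClosed S := by
    have : S = Ici 0 ∩ (fun t : ℝ => x + t • v) ⁻¹' Ω := rfl
    rw [this]
    exact isClosed_Ici.inter (hΩc.isClosed.preimage hcont)
  have hS0 : (0 : ℝ) ∈ S := ⟨le_refl 0, by simpa using hxΩ⟩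
  have hSne : S.Nonempty := ⟨0, hS0⟩
  -- boundedness
  obtain ⟨R, hR⟩ := hΩc.isBounded.subset_ball 0
  have hSbdd : BddAbove S := by
    refine ⟨(R + ‖x‖) / ‖v‖, fun t ht => ?_⟩
    obtain ⟨ht0, htΩ⟩ := ht
    have h1 : ‖x + t • v‖ < R := by simpa [Metric.mem_ball, dist_eq_norm] using hR htΩ
    have h2 : ‖t • v‖ ≤ ‖x + t • v‖ + ‖x‖ := by
      have := norm_sub_le (x + t • v) x
      simpa using this
    have h3 : t * ‖v‖ ≤ R + ‖x‖ := by
      rw [norm_smul, Real.norm_eq_abs, abs_of_nonneg ht0] at h2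
      linarith
    rw [le_div_iff₀ (norm_pos_iff.mpr hv)]
    linarith
  set T : ℝ := sSup S with hT
  have hTS : T ∈ S := hSclosed.csSup_mem hSne hSbdd
  -- T is positive since x is interior
  have hTpos : 0 < T := by
    have hmem : ∀ᶠ t in nhds (0 : ℝ), x + t • v ∈ Ω := by
      have h0 : Filter.Tendsto (fun t : ℝ => x + t • v) (nhds 0) (nhds x) := by
        have := hcont.tendsto 0
        simpa using this
      exact h0.eventually (Filter.eventually_of_mem
        (mem_interior_iff_mem_nhds.mp hx) (fun y hy => hy))
    obtain ⟨ε, hεpos, hε⟩ := Metric.eventually_nhds_iff.mp hmem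
    have hεS : (ε / 2) ∈ S := by
      refine ⟨by positivity, hε ?_⟩
      simp only [Real.dist_eq, sub_zero]
      rw [abs_of_pos (by positivity)]
      linarith
    calc (0:ℝ) < ε / 2 := by positivity
    _ ≤ T := le_csSup hSbdd hεS
  set y : EuclideanSpace ℝ (Fin n) := x + T • v with hy
  have hyΩ : y ∈ Ω := hTS.2
  -- y is on the frontier
  have hyfr : y ∈ frontier Ω := by
    rw [frontier, mem_diff]
    refine ⟨subset_closure hyΩ, fun hyint => ?_⟩
    have hmem : ∀ᶠ t in nhds T, x + t • v ∈ Ω := by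
      have hT0 : Filter.Tendsto (fun t : ℝ => x + t • v) (nhds T) (nhds y) :=
        hcont.tendsto T
      exact hT0.eventually (Filter.eventually_of_mem
        (mem_interior_iff_mem_nhds.mp hyint) (fun z hz => hz))
    obtain ⟨ε, hεpos, hε⟩ := Metric.eventually_nhds_iff.mp hmem
    have h1 : (T + ε / 2) ∈ S := by
      refine ⟨by linarith, hε ?_⟩
      simp only [Real.dist_eq, add_sub_cancel_left]
      rw [abs_of_pos (by positivity)]
      linarith
    have := le_csSup hSbdd h1
    linarith
  -- one-dimensional restriction
  set g : ℝ → ℝ := fun t => f (x + t • v) with hg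
  have hgconv : ConvexOn ℝ ((fun t : ℝ => x + t • v) ⁻¹' Ω) g := by
    have hmain := hconv.comp_affineMap (AffineMap.lineMap x (x + v))
    have heq : ∀ t : ℝ, (AffineMap.lineMap x (x + v)) t = x + t • v := by
      intro t
      rw [AffineMap.lineMap_apply, vsub_eq_sub, vadd_eq_add, add_sub_cancel_left, add_comm]
    have hset : ((AffineMap.lineMap x (x + v) : ℝ →ᵃ[ℝ] _) ⁻¹' Ω)
        = (fun t : ℝ => x + t • v) ⁻¹' Ω := by
      ext t; simp [heq t]
    have hfun : (f ∘ (AffineMap.lineMap x (x + v))) = g := by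
      ext t; simp [hg, heq t]
    rw [hset, hfun] at hmain
    exact hmain
  have hderiv : ∀ z ∈ Ω, ∀ t : ℝ, x + t • v = z →
      HasDerivAt g (fderiv ℝ f z v) t := by
    intro z hz t htz
    subst htz
    have h1 : HasDerivAt (fun t : ℝ => x + t • v) v t := by
      simpa using ((hasDerivAt_id t).smul_const v).const_add x
    have h2 : HasFDerivAt f (fderiv ℝ f (x + t • v)) (x + t • v) :=
      (hdiff _ hz).hasFDerivAt
    exact h2.comp_hasDerivAt t h1
  have h0mem : (0 : ℝ) ∈ (fun t : ℝ => x + t • v) ⁻¹' Ω := by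
    simpa using hxΩ
  have hTmem : T ∈ (fun t : ℝ => x + t • v) ⁻¹' Ω := hyΩ
  have hd0 : HasDerivAt g (fderiv ℝ f x v) 0 := by
    refine hderiv x hxΩ 0 (by simp)
  have hdT : HasDerivAt g (fderiv ℝ f y v) T := hderiv y hyΩ T rfl
  have h1 : fderiv ℝ f x v ≤ slope g 0 T :=
    hgconv.le_slope_of_hasDerivAt h0mem hTmem hTpos hd0
  have h2 : slope g 0 T ≤ fderiv ℝ f y v :=
    hgconv.slope_le_of_hasDerivAt h0mem hTmem hTpos hdT
  have h3 : fderiv ℝ f y v ≤ ‖fderiv ℝ f y‖ * ‖v‖ := by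
    calc fderiv ℝ f y v ≤ ‖fderiv ℝ f y v‖ := le_abs_self _
    _ ≤ ‖fderiv ℝ f y‖ * ‖v‖ := (fderiv ℝ f y).le_opNorm v
  have h4 : ‖fderiv ℝ f y‖ * ‖v‖ ≤ L * ‖v‖ :=
    mul_le_mul_of_nonneg_right (hbd y hyfr) (norm_nonneg v)
  linarith

theorem gradient_bound_on_frontier
    (n : ℕ) (hn : 1 ≤ n)
    (Ω : Set (EuclideanSpace ℝ (Fin n)))
    (hΩne : Ω.Nonempty) (hΩc : IsCompact Ω) (hΩconv : Convex ℝ Ω)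
    (f : EuclideanSpace ℝ (Fin n) → ℝ)
    (hdiff : ∀ x ∈ Ω, DifferentiableAt ℝ f x)
    (hconv : ConvexOn ℝ Ω f)
    (L : ℝ) (hL : 0 ≤ L)
    (hbd : ∀ y ∈ frontier Ω, ‖fderiv ℝ f y‖ ≤ L) :
    ∀ x ∈ Ω, ‖fderiv ℝ f x‖ ≤ L := by
  intro x hxΩ
  by_cases hx : x ∈ frontier Ω
  · exact hbd x hx
  · have hxint : x ∈ interior Ω := by
      by_contra h
      exact hx (by rw [frontier, Set.mem_diff]; exact ⟨subset_closure hxΩ, h⟩)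
    -- bound the operator norm via the directional estimate
    refine ContinuousLinearMap.opNorm_le_bound _ hL (fun v => ?_)
    rw [Real.norm_eq_abs, abs_le]
    constructor
    · have := dir_deriv_le hΩc hΩconv hdiff hconv hL hbd hxint (-v)
      simp only [map_neg, norm_neg] at this
      linarith
    · exact dir_deriv_le hΩc hΩconv hdiff hconv hL hbd hxint v
end

section
/- Let n ≥ 1, let Ω ⊆ EuclideanSpace ℝ (Fin n) be a nonempty compact convex set symmetric under negation (x ∈ Ω implies −x ∈ Ω), and let L > 0. Let f : EuclideanSpace ℝ (Fin n) → ℝ be convex on Ω, even on Ω (f(−x) = f(x) for x ∈ Ω), Lipschitz on Ω with constant L, and satisfy f(y) = 0 for every y in the frontier of Ω. Set H := −f(0). Then the closed ball of radius H/L centered at the origin is contained in Ω. -/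
theorem inscribed_ball
    (n : ℕ) (hn : 1 ≤ n)
    (Ω : Set (EuclideanSpace ℝ (Fin n)))
    (hΩne : Ω.Nonempty) (hΩc : IsCompact Ω) (hΩconv : Convex ℝ Ω)
    (hΩsym : ∀ x ∈ Ω, -x ∈ Ω)
    (L : ℝ) (hL : 0 < L)
    (f : EuclideanSpace ℝ (Fin n) → ℝ)
    (hconv : ConvexOn ℝ Ω f)
    (heven : ∀ x ∈ Ω, f (-x) = f x)
    (hlip : LipschitzOnWith L.toNNReal f Ω)
    (hbd : ∀ y ∈ frontier Ω, f y = 0) :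
    Metric.closedBall 0 ((-f 0) / L) ⊆ Ω := by
  have : Nontrivial (EuclideanSpace ℝ (Fin n)) := by
    have : Nonempty (Fin n) := ⟨⟨0, hn⟩⟩
    infer_instance
  obtain ⟨x, hx⟩ := hΩne
  have h0 : (0 : EuclideanSpace ℝ (Fin n)) ∈ Ω := by
    have := hΩconv hx (hΩsym x hx) (by norm_num : (0:ℝ) ≤ 1/2)
      (by norm_num : (0:ℝ) ≤ 1/2) (by norm_num)
    simpa using this
  obtain ⟨y, hyf, hyd⟩ := hΩc.exists_mem_frontier_infDist_compl_eq_dist h0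
  have hyΩ : y ∈ Ω := hΩc.isClosed.frontier_subset hyf
  have hlipb : dist (f 0) (f y) ≤ L * dist 0 y := by
    have := hlip.dist_le_mul 0 h0 y hyΩ
    rwa [Real.coe_toNNReal _ hL.le] at this
  have key : (-f 0) / L ≤ Metric.infDist 0 Ωᶜ := by
    rw [div_le_iff₀ hL, hyd, mul_comm]
    calc -f 0 ≤ |f 0| := neg_le_abs _
      _ = dist (f 0) (f y) := by rw [hbd y hyf, Real.dist_eq, sub_zero]
      _ ≤ L * dist 0 y := hlipb
  calc Metric.closedBall 0 ((-f 0) / L)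
      ⊆ Metric.closedBall 0 (Metric.infDist 0 Ωᶜ) := Metric.closedBall_subset_closedBall key
    _ ⊆ closure Ω := Metric.closedBall_infDist_compl_subset_closure h0
    _ = Ω := hΩc.isClosed.closure_eq
end

section
/- Let n ≥ 1, let Ω ⊆ EuclideanSpace ℝ (Fin n) be a nonempty compact convex set symmetric under negation (x ∈ Ω implies −x ∈ Ω), and let L > 0. Let f : EuclideanSpace ℝ (Fin n) → ℝ be convex on Ω, even on Ω, Lipschitz on Ω with constant L, and satisfy f(y) = 0 for every y in the frontier of Ω. Set H := −f(0). Then the cone { (x, y) ∈ EuclideanSpace ℝ (Fin n) × ℝ : ‖x‖ ≤ H/L and −H + L‖x‖ ≤ y ≤ 0 } is contained in the region { (x, y) : x ∈ Ω and f(x) ≤ y ≤ 0 } between the graph of f and the hyperplane {y = 0}. -/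
theorem cone_inclusion
    (n : ℕ) (hn : 1 ≤ n)
    (Ω : Set (EuclideanSpace ℝ (Fin n)))
    (hΩne : Ω.Nonempty) (hΩc : IsCompact Ω) (hΩconv : Convex ℝ Ω)
    (hΩsym : ∀ x ∈ Ω, -x ∈ Ω)
    (L : ℝ) (hL : 0 < L)
    (f : EuclideanSpace ℝ (Fin n) → ℝ)
    (hconv : ConvexOn ℝ Ω f)
    (heven : ∀ x ∈ Ω, f (-x) = f x)
    (hlip : LipschitzOnWith L.toNNReal f Ω)
    (hbd : ∀ y ∈ frontier Ω, f y = 0) :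
    {p : EuclideanSpace ℝ (Fin n) × ℝ |
        ‖p.1‖ ≤ (-f 0) / L ∧ -(-f 0) + L * ‖p.1‖ ≤ p.2 ∧ p.2 ≤ 0}
      ⊆ {p : EuclideanSpace ℝ (Fin n) × ℝ | p.1 ∈ Ω ∧ f p.1 ≤ p.2 ∧ p.2 ≤ 0} := by
  have hL' : (L.toNNReal : ℝ) = L := Real.coe_toNNReal L hL.le
  obtain ⟨a, ha⟩ := hΩne
  have h0Ω : (0 : EuclideanSpace ℝ (Fin n)) ∈ Ω := by
    have h := hΩconv ha (hΩsym a ha) (by norm_num : (0:ℝ) ≤ 1/2)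
      (by norm_num : (0:ℝ) ≤ 1/2) (by norm_num)
    have : (1/2 : ℝ) • a + (1/2 : ℝ) • (-a) = 0 := by
      rw [smul_neg]; abel
    rwa [this] at h
  rintro ⟨x, y⟩ ⟨h1, h2, h3⟩
  simp only [Set.mem_setOf_eq] at h1 h2 h3 ⊢
  have key : ∀ z ∈ Ω, f z ≤ f 0 + L * ‖z‖ := by
    intro z hz
    have := hlip.dist_le_mul z hz 0 h0Ω
    rw [hL'] at this
    have hd : dist z 0 = ‖z‖ := by simp
    rw [hd, Real.dist_eq] at this
    have := abs_le.mp this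
    linarith [this.1, this.2]
  have hxΩ : x ∈ Ω := by
    by_contra hx
    have hxne : x ≠ 0 := by rintro rfl; exact hx h0Ω
    have hxpos : 0 < ‖x‖ := norm_pos_iff.mpr hxne
    have hH : L * ‖x‖ ≤ -f 0 := by
      have := (le_div_iff₀ hL).mp h1
      linarith
    set S : Set ℝ := {t : ℝ | t ∈ Set.Icc (0:ℝ) 1 ∧ t • x ∈ Ω} with hS
    have hSne : S.Nonempty := ⟨0, ⟨by norm_num, by simpa using h0Ω⟩⟩
    have hSbdd : BddAbove S := ⟨1, fun t ht => ht.1.2⟩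
    have hSc : IsClosed S := by
      apply IsClosed.inter isClosed_Icc
      exact hΩc.isClosed.preimage (continuous_id.smul continuous_const)
    have htS : sSup S ∈ S := hSc.csSup_mem hSne hSbdd
    set t := sSup S with ht
    obtain ⟨⟨ht0, ht1⟩, htΩ⟩ := htS
    have htlt : t < 1 := by
      rcases lt_or_eq_of_le ht1 with h | h
      · exact h
      · exfalso; apply hx; rw [h] at htΩ; simpa using htΩ
    have hfront : t • x ∈ frontier Ω := by
      rw [hΩc.isClosed.frontier_eq]
      refine ⟨htΩ, fun hint => ?_⟩
      obtain ⟨ε, hε, hball⟩ := Metric.isOpen_iff.mp isOpen_interior _ hint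
      set t' := min 1 (t + ε / (2 * ‖x‖)) with ht'
      have htt' : t < t' := lt_min htlt (lt_add_of_pos_right t (by positivity))
      have ht'S : t' ∈ S := by
        refine ⟨⟨le_trans ht0 htt'.le, min_le_left _ _⟩, ?_⟩
        apply interior_subset
        apply hball
        rw [Metric.mem_ball]
        have : dist (t' • x) (t • x) = |t' - t| * ‖x‖ := by
          rw [dist_eq_norm, ← sub_smul, norm_smul, Real.norm_eq_abs]
        rw [this, abs_of_pos (by linarith)]
        have ht'le : t' ≤ t + ε / (2 * ‖x‖) := min_le_right _ _
        have : (t' - t) * ‖x‖ ≤ (ε / (2 * ‖x‖)) * ‖x‖ := by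
          apply mul_le_mul_of_nonneg_right (by linarith) hxpos.le
        have heq : (ε / (2 * ‖x‖)) * ‖x‖ = ε / 2 := by
          field_simp
        linarith [heq ▸ this]
      have := le_csSup hSbdd ht'S
      linarith
    have hfz : f (t • x) = 0 := hbd _ hfront
    have := hlip.dist_le_mul (t • x) htΩ 0 h0Ω
    rw [hL'] at this
    have hd : dist (t • x) 0 = t * ‖x‖ := by
      simp [norm_smul, abs_of_nonneg ht0]
    rw [hd, Real.dist_eq, hfz] at this
    have habs := abs_le.mp this
    have : L * (t * ‖x‖) < L * ‖x‖ := by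
      apply mul_lt_mul_of_pos_left _ hL
      nlinarith
    linarith [habs.1, habs.2]
  refine ⟨hxΩ, ?_, h3⟩
  have := key x hxΩ
  linarith
end

section
/- Let n ≥ 1 and let Ω ⊆ EuclideanSpace ℝ (Fin n) be a compact convex set with 0 ∈ Ω, and set r := Metric.infDist 0 (frontier Ω). Let Λ > 0 and let f : EuclideanSpace ℝ (Fin n) → ℝ be twice continuously differentiable (ContDiff ℝ 2), convex on Ω, with f(y) = 0 for every y in the frontier of Ω, and such that for every x in the interior of Ω the determinant of the Hessian matrix (the n × n matrix with entries iteratedFDeriv ℝ 2 f x applied to the pair of i-th and j-th standard basis vectors of EuclideanSpace ℝ (Fin n)) is at least Λ. Then f(0) ≤ −(Λ^(1/n) / 2) · r². -/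
/-!
For `0 < c < Λ ^ (1 / n)` compare `f` with the paraboloid `c / 2 * ‖y‖ ^ 2`: the difference
`f y - c / 2 * ‖y‖ ^ 2` attains its maximum on the compact set `Ω`. At an interior maximum the
Hessian of `f` would lie between `0` (convexity) and `c • 1`, so its determinant would be at most
`c ^ n < Λ`. Hence the maximum sits on the frontier, where `f = 0` and `‖y‖ ≥ r`, which gives
`f 0 ≤ -(c / 2) * r ^ 2`; now let `c ↑ Λ ^ (1 / n)`. Both Hessian bounds are read off the
symmetric second difference `f (x + h v) + f (x - h v) - 2 f x = h ^ 2 D²f x (v, v) + o(h ^ 2)`.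
-/

open Set Filter Topology

section SecondDifference
variable {E : Type*} [NormedAddCommGroup E] [NormedSpace ℝ E]

theorem tendsto_add_smul_nhdsGT (x w : E) :
    Tendsto (fun h : ℝ => x + h • w) (𝓝[>] 0) (𝓝 x) := by
  have hcont : Continuous fun h : ℝ => x + h • w := by fun_prop
  simpa using (hcont.tendsto 0).mono_left nhdsWithin_le_nhds

variable {f : E → ℝ} {x : E}

theorem tendsto_second_difference_quotient (hf : Differentiable ℝ f)
    (hf' : DifferentiableAt ℝ (fderiv ℝ f) x) (v : E) :
    Tendsto (fun h : ℝ => (f (x + h • v) + f (x - h • v) - 2 * f x) / h ^ 2) (𝓝[>] 0)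
      (𝓝 (fderiv ℝ (fderiv ℝ f) x v v)) := by
  -- with `v = 0`, `taylor_approx_two_segment` is the Taylor expansion along `h ↦ x + h • w`
  have taylor (w : E) := convex_univ.taylor_approx_two_segment (fun y _ => (hf y).hasFDerivAt)
    (mem_univ x) (by simpa using hf'.hasFDerivAt) (v := 0) (w := w)
    (by simp) (by simp)
  have hsum := ((taylor v).add (taylor (-v))).tendsto_div_nhds_zero
  have := (tendsto_const_nhds (x := fderiv ℝ (fderiv ℝ f) x v v)).add hsum
  rw [add_zero] at this
  refine this.congr' ?_
  filter_upwards [self_mem_nhdsWithin] with h (hh : 0 < h)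
  simp only [smul_zero, add_zero, map_neg, neg_apply, neg_neg, smul_neg, smul_eq_mul,
    ← sub_eq_add_neg]
  field_simp
  ring

theorem ConvexOn.fderiv_fderiv_apply_self_nonneg {s : Set E} (hconv : ConvexOn ℝ s f)
    (hx : x ∈ interior s) (hf : Differentiable ℝ f) (hf' : DifferentiableAt ℝ (fderiv ℝ f) x)
    (v : E) : 0 ≤ fderiv ℝ (fderiv ℝ f) x v v := by
  refine ge_of_tendsto (tendsto_second_difference_quotient hf hf' v) ?_
  have hs : s ∈ 𝓝 x := mem_interior_iff_mem_nhds.mp hx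
  filter_upwards [(tendsto_add_smul_nhdsGT x v).eventually hs,
    (tendsto_add_smul_nhdsGT x (-v)).eventually hs] with h hplus hminus
  rw [smul_neg, ← sub_eq_add_neg] at hminus
  have hmid := hconv.2 hplus hminus (by norm_num : (0 : ℝ) ≤ 1 / 2) (by norm_num : (0 : ℝ) ≤ 1 / 2)
    (by norm_num)
  rw [show (1 / 2 : ℝ) • (x + h • v) + (1 / 2 : ℝ) • (x - h • v) = x by module, smul_eq_mul,
    smul_eq_mul] at hmid
  exact div_nonneg (by linarith) (sq_nonneg h)

end SecondDifference

theorem IsLocalMax.fderiv_fderiv_apply_self_le {F : Type*} [NormedAddCommGroup F]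
    [InnerProductSpace ℝ F] {f : F → ℝ} {x p : F} {c : ℝ}
    (hmax : IsLocalMax (fun y => f y - c / 2 * ‖y - p‖ ^ 2) x) (hf : Differentiable ℝ f)
    (hf' : DifferentiableAt ℝ (fderiv ℝ f) x) (v : F) :
    fderiv ℝ (fderiv ℝ f) x v v ≤ c * ‖v‖ ^ 2 := by
  refine le_of_tendsto (tendsto_second_difference_quotient hf hf' v) ?_
  filter_upwards [(tendsto_add_smul_nhdsGT x v).eventually hmax,
    (tendsto_add_smul_nhdsGT x (-v)).eventually hmax, self_mem_nhdsWithin]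
    with h hplus hminus (hh : 0 < h)
  have hpar := parallelogram_law_with_norm ℝ (x - p) (h • v)
  rw [show x - p + h • v = x + h • v - p by abel, show x - p - h • v = x - h • v - p by abel,
    norm_smul, Real.norm_eq_abs, mul_pow, sq_abs] at hpar
  rw [smul_neg, ← sub_eq_add_neg] at hminus
  rw [div_le_iff₀ (by positivity)]
  linear_combination hplus + hminus + c / 2 * hpar

open Matrix

theorem Matrix.PosSemidef.det_le_pow {ι : Type*} [Fintype ι] [DecidableEq ι]
    {A : Matrix ι ι ℝ} {c : ℝ} (hA : A.PosSemidef) (hle : ∀ u, u ⬝ᵥ A *ᵥ u ≤ c * (u ⬝ᵥ u)) :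
    A.det ≤ c ^ Fintype.card ι := by
  have heig (i : ι) : hA.1.eigenvalues i ≤ c := by
    set u := hA.1.eigenvectorBasis i
    have hu : (u : ι → ℝ) ⬝ᵥ u = 1 := by
      have hnorm : ‖u‖ = 1 := hA.1.eigenvectorBasis.orthonormal.1 i
      have := EuclideanSpace.inner_eq_star_dotProduct u u
      rwa [real_inner_self_eq_norm_sq, hnorm, one_pow, star_trivial, eq_comm] at this
    simpa [hA.1.eigenvalues_eq i, hu] using hle u
  rw [hA.1.det_eq_prod_eigenvalues]
  calc ∏ i, (hA.1.eigenvalues i : ℝ) ≤ ∏ _i : ι, c :=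
        Finset.prod_le_prod (fun i _ => hA.eigenvalues_nonneg i) (fun i _ => heig i)
    _ = c ^ Fintype.card ι := by simp

section Hessian
variable {ι : Type*} [Fintype ι] [DecidableEq ι]

noncomputable def hessianMatrix (f : EuclideanSpace ℝ ι → ℝ) (x : EuclideanSpace ℝ ι) :
    Matrix ι ι ℝ :=
  Matrix.of fun i j =>
    iteratedFDeriv ℝ 2 f x ![EuclideanSpace.single i 1, EuclideanSpace.single j 1]

theorem dotProduct_hessianMatrix_mulVec (f : EuclideanSpace ℝ ι → ℝ) (x : EuclideanSpace ℝ ι)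
    (u : ι → ℝ) :
    u ⬝ᵥ hessianMatrix f x *ᵥ u =
      fderiv ℝ (fderiv ℝ f) x (WithLp.toLp 2 u) (WithLp.toLp 2 u) := by
  let b := (EuclideanSpace.basisFun ι ℝ).toBasis
  have hH :
      hessianMatrix f x = LinearMap.toMatrix₂ b b (fderiv ℝ (fderiv ℝ f) x).toLinearMap₁₂ := by
    ext i j
    simp [hessianMatrix, iteratedFDeriv_two_apply, LinearMap.toMatrix₂_apply, b]
  rw [hH]
  exact dotProduct_toMatrix₂_mulVec b b (fderiv ℝ (fderiv ℝ f) x).toLinearMap₁₂ u u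

theorem isHermitian_hessianMatrix {f : EuclideanSpace ℝ ι → ℝ} {x : EuclideanSpace ℝ ι}
    (hf : ContDiffAt ℝ 2 f x) : (hessianMatrix f x).IsHermitian := by
  ext i j
  simp only [hessianMatrix, conjTranspose_apply, of_apply, star_trivial, iteratedFDeriv_two_apply]
  exact hf.isSymmSndFDerivAt (by simp) _ _

theorem det_hessianMatrix_le {f : EuclideanSpace ℝ ι → ℝ} {x : EuclideanSpace ℝ ι} {c : ℝ}
    (hf : ContDiffAt ℝ 2 f x) (hnonneg : ∀ v, 0 ≤ fderiv ℝ (fderiv ℝ f) x v v)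
    (hle : ∀ v, fderiv ℝ (fderiv ℝ f) x v v ≤ c * ‖v‖ ^ 2) :
    (hessianMatrix f x).det ≤ c ^ Fintype.card ι := by
  refine PosSemidef.det_le_pow ?_ fun u => ?_
  · refine .of_dotProduct_mulVec_nonneg (isHermitian_hessianMatrix hf) fun u => ?_
    simpa [dotProduct_hessianMatrix_mulVec] using hnonneg (WithLp.toLp 2 u)
  · have hnorm : ‖WithLp.toLp 2 u‖ ^ 2 = u ⬝ᵥ u := by
      rw [← real_inner_self_eq_norm_sq, EuclideanSpace.inner_toLp_toLp, star_trivial]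
    rw [dotProduct_hessianMatrix_mulVec, ← hnorm]
    exact hle _

theorem ConvexOn.apply_le_neg_mul_infDist_frontier_sq {Ω : Set (EuclideanSpace ℝ ι)}
    {f : EuclideanSpace ℝ ι → ℝ} {p : EuclideanSpace ℝ ι} {c : ℝ} (hconv : ConvexOn ℝ Ω f)
    (hΩ : IsCompact Ω) (hp : p ∈ Ω) (hf : ContDiff ℝ 2 f) (hc : 0 ≤ c)
    (hbd : ∀ y ∈ frontier Ω, f y ≤ 0)
    (hdet : ∀ x ∈ interior Ω, c ^ Fintype.card ι < (hessianMatrix f x).det) :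
    f p ≤ -(c / 2) * Metric.infDist p (frontier Ω) ^ 2 := by
  let g y := f y - c / 2 * ‖y - p‖ ^ 2
  have hg : Continuous g := by have := hf.continuous; fun_prop
  obtain ⟨x₀, hx₀, hmax⟩ := hΩ.exists_isMaxOn ⟨p, hp⟩ hg.continuousOn
  by_cases hfr : x₀ ∈ frontier Ω
  · have hr : Metric.infDist p (frontier Ω) ≤ ‖x₀ - p‖ := by
      simpa [dist_eq_norm'] using Metric.infDist_le_dist_of_mem hfr
    have hgp : f p ≤ f x₀ - c / 2 * ‖x₀ - p‖ ^ 2 := by simpa [g] using hmax hp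
    have := hbd x₀ hfr
    nlinarith [pow_le_pow_left₀ Metric.infDist_nonneg hr 2]
  · have hint : x₀ ∈ interior Ω := by
      by_contra h
      exact hfr ⟨subset_closure hx₀, h⟩
    have hloc : IsLocalMax g x₀ := hmax.isLocalMax (mem_interior_iff_mem_nhds.mp hint)
    have hdiff : Differentiable ℝ f := hf.differentiable two_ne_zero
    have hdiff' : DifferentiableAt ℝ (fderiv ℝ f) x₀ :=
      (hf.fderiv_right (m := 1) le_rfl).differentiable one_ne_zero x₀
    refine absurd (hdet x₀ hint) (not_lt.mpr ?_)
    exact det_hessianMatrix_le hf.contDiffAt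
      (hconv.fderiv_fderiv_apply_self_nonneg hint hdiff hdiff')
      (hloc.fderiv_fderiv_apply_self_le hdiff hdiff')

end Hessian

theorem monge_ampere_comparison_general
    (n : ℕ) (hn : 1 ≤ n)
    (Ω : Set (EuclideanSpace ℝ (Fin n)))
    (hΩc : IsCompact Ω) (h0 : (0 : EuclideanSpace ℝ (Fin n)) ∈ Ω)
    (Λ : ℝ) (hΛ : 0 < Λ)
    (f : EuclideanSpace ℝ (Fin n) → ℝ)
    (hf : ContDiff ℝ 2 f)
    (hconv : ConvexOn ℝ Ω f)
    (hbd : ∀ y ∈ frontier Ω, f y = 0)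
    (hdet : ∀ x ∈ interior Ω,
      Λ ≤ Matrix.det (Matrix.of fun i j : Fin n =>
        iteratedFDeriv ℝ 2 f x
          ![EuclideanSpace.single i (1 : ℝ), EuclideanSpace.single j (1 : ℝ)])) :
    f 0 ≤ -(Λ ^ ((1 : ℝ) / n) / 2) * (Metric.infDist 0 (frontier Ω)) ^ 2 := by
  have hLn : (Λ ^ ((1 : ℝ) / n)) ^ n = Λ := by
    rw [one_div]; exact Real.rpow_inv_natCast_pow hΛ.le (by omega)
  set L := Λ ^ ((1 : ℝ) / n)
  have hbelow : ∀ c ∈ Ioo 0 L, f 0 ≤ -(c / 2) * Metric.infDist 0 (frontier Ω) ^ 2 :=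
    fun c hc => hconv.apply_le_neg_mul_infDist_frontier_sq hΩc h0 hf hc.1.le
      (fun y hy => (hbd y hy).le) fun x hx => by
        simpa using (pow_lt_pow_left₀ hc.2 hc.1.le (by omega)).trans_le (hLn ▸ hdet x hx)
  have hcont : Continuous fun c : ℝ => -(c / 2) * Metric.infDist 0 (frontier Ω) ^ 2 := by
    fun_prop
  exact ge_of_tendsto ((hcont.tendsto L).mono_left nhdsWithin_le_nhds)
    (eventually_of_mem (Ioo_mem_nhdsLT (by positivity)) hbelow)

theorem monge_ampere_comparison
    (n : ℕ) (hn : 1 ≤ n)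
    (Ω : Set (EuclideanSpace ℝ (Fin n)))
    (hΩc : IsCompact Ω) (hΩconv : Convex ℝ Ω) (h0 : (0 : EuclideanSpace ℝ (Fin n)) ∈ Ω)
    (Λ : ℝ) (hΛ : 0 < Λ)
    (f : EuclideanSpace ℝ (Fin n) → ℝ)
    (hf : ContDiff ℝ 2 f)
    (hconv : ConvexOn ℝ Ω f)
    (hbd : ∀ y ∈ frontier Ω, f y = 0)
    (hdet : ∀ x ∈ interior Ω,
      Λ ≤ Matrix.det (Matrix.of fun i j : Fin n =>
        iteratedFDeriv ℝ 2 f x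
          ![EuclideanSpace.single i (1 : ℝ), EuclideanSpace.single j (1 : ℝ)])) :
    f 0 ≤ -(Λ ^ ((1 : ℝ) / n) / 2) * (Metric.infDist 0 (frontier Ω)) ^ 2 :=
  monge_ampere_comparison_general n hn Ω hΩc h0 Λ hΛ f hf hconv hbd hdet
end

section
/- Let E be a real inner product space, K ⊆ E a set, and x, x' ∈ K. Let u, u' ∈ E be unit vectors such that ⟪z − x, u⟫ ≤ 0 for all z ∈ K and ⟪z − x', u'⟫ ≤ 0 for all z ∈ K. If t > 0 and x + t • u = x' + t • u', then u = u' and x = x'. -/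
open RealInnerProductSpace

theorem outer_normal_map_injective
    {E : Type*} [NormedAddCommGroup E] [InnerProductSpace ℝ E]
    (K : Set E) (x x' : E) (hx : x ∈ K) (hx' : x' ∈ K)
    (u u' : E) (hu : ‖u‖ = 1) (hu' : ‖u'‖ = 1)
    (hsupp : ∀ z ∈ K, ⟪z - x, u⟫ ≤ 0)
    (hsupp' : ∀ z ∈ K, ⟪z - x', u'⟫ ≤ 0)
    (t : ℝ) (ht : 0 < t)
    (heq : x + t • u = x' + t • u') :
    u = u' ∧ x = x' := by
  have hd : x - x' = t • (u' - u) := by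
    rw [smul_sub]
    linear_combination (norm := module) heq
  have h1 : ⟪x' - x, u⟫ ≤ 0 := hsupp x' hx'
  have h2 : ⟪x - x', u'⟫ ≤ 0 := hsupp' x hx
  have e1 : ⟪x - x', u⟫ = t * (⟪u', u⟫ - 1) := by
    rw [hd, real_inner_smul_left, inner_sub_left, real_inner_self_eq_norm_sq, hu]
    ring
  have h1' : 0 ≤ t * (⟪u', u⟫ - 1) := by
    rw [← e1, ← neg_sub x' x, inner_neg_left]; linarith
  have hge : (1 : ℝ) ≤ ⟪u', u⟫ := by nlinarith
  have hle : ⟪u', u⟫ ≤ 1 := by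
    have := real_inner_le_norm u' u
    rw [hu, hu'] at this; linarith
  have huu : u = u' :=
    ((inner_eq_one_iff_of_norm_eq_one hu' hu).mp (le_antisymm hle hge)).symm
  refine ⟨huu, ?_⟩
  have h0 : x - x' = 0 := by rw [hd, huu, sub_self, smul_zero]
  exact sub_eq_zero.mp h0
end

section
/- Let E be a real inner product space, K ⊆ E a set, x ∈ K, and u ∈ E a unit vector with ⟪z − x, u⟫ ≤ 0 for all z ∈ K. Let t > 0 and set y := x + t • u. Then: (a) ⟪w − y, u⟫ ≤ 0 for every w in the Minkowski sum K + Metric.closedBall 0 t; and (b) y belongs to the frontier of K + Metric.closedBall 0 t. -/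
open RealInnerProductSpace Pointwise

theorem outer_parallel_body_boundary
    {E : Type*} [NormedAddCommGroup E] [InnerProductSpace ℝ E]
    (K : Set E) (x : E) (hx : x ∈ K)
    (u : E) (hu : ‖u‖ = 1)
    (hsupp : ∀ z ∈ K, ⟪z - x, u⟫ ≤ 0)
    (t : ℝ) (ht : 0 < t) :
    (∀ w ∈ K + Metric.closedBall (0 : E) t, ⟪w - (x + t • u), u⟫ ≤ 0) ∧
      x + t • u ∈ frontier (K + Metric.closedBall (0 : E) t) := by
  have key : ∀ w ∈ K + Metric.closedBall (0 : E) t, ⟪w - (x + t • u), u⟫ ≤ 0 := by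
    rintro w hw
    rw [Set.mem_add] at hw
    obtain ⟨z, hz, b, hb, rfl⟩ := hw
    have h1 := hsupp z hz
    have h2 : ⟪b, u⟫ ≤ t := by
      calc ⟪b, u⟫ ≤ ‖b‖ * ‖u‖ := real_inner_le_norm b u
        _ ≤ t := by rw [hu, mul_one]; simpa using Metric.mem_closedBall.mp hb
    have he : z + b - (x + t • u) = (z - x) + (b - t • u) := by abel
    rw [he, inner_add_left, inner_sub_left, inner_sub_left, real_inner_smul_left,
      real_inner_self_eq_norm_sq, hu]
    rw [inner_sub_left] at h1
    nlinarith
  refine ⟨key, ?_⟩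
  have hmem : x + t • u ∈ K + Metric.closedBall (0 : E) t := by
    rw [Set.mem_add]
    refine ⟨x, hx, t • u, ?_, rfl⟩
    simp [norm_smul, hu, abs_of_pos ht]
  rw [frontier]
  refine ⟨subset_closure hmem, ?_⟩
  intro hint
  rw [mem_interior_iff_mem_nhds, Metric.mem_nhds_iff] at hint
  obtain ⟨ε, hε, hball⟩ := hint
  have hw : x + t • u + (ε / 2) • u ∈ K + Metric.closedBall (0 : E) t := by
    apply hball
    simp [Metric.mem_ball, dist_eq_norm, norm_smul, hu, abs_of_pos hε]
    linarith
  have := key _ hw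
  rw [add_sub_cancel_left, real_inner_smul_left, real_inner_self_eq_norm_sq, hu] at this
  nlinarith
end

section
/- Let E be a real inner product space, K ⊆ E a set, t > 0, x ∈ K, and b ∈ E with ‖b‖ ≤ 1; set y := x + t • b. Suppose u ∈ E is a unit vector such that ⟪w − y, u⟫ ≤ 0 for every w in the Minkowski sum K + Metric.closedBall 0 t. Then b = u and ⟪z − x, u⟫ ≤ 0 for all z ∈ K (i.e. u is an outer unit normal of K at x). -/
open RealInnerProductSpace Pointwise

theorem outer_parallel_body_decomposition
    {E : Type*} [NormedAddCommGroup E] [InnerProductSpace ℝ E]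
    (K : Set E) (t : ℝ) (ht : 0 < t)
    (x : E) (hx : x ∈ K) (b : E) (hb : ‖b‖ ≤ 1)
    (u : E) (hu : ‖u‖ = 1)
    (hsupp : ∀ w ∈ K + Metric.closedBall (0 : E) t, ⟪w - (x + t • b), u⟫ ≤ 0) :
    b = u ∧ ∀ z ∈ K, ⟪z - x, u⟫ ≤ 0 := by
  have hmem : ∀ z ∈ K, ∀ c : E, ‖c‖ ≤ 1 → z + t • c ∈ K + Metric.closedBall (0 : E) t := by
    intro z hz c hc
    exact Set.add_mem_add hz (by
      simp only [Metric.mem_closedBall, dist_zero_right, norm_smul, Real.norm_eq_abs,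
        abs_of_pos ht]
      nlinarith)
  have h1 : ⟪x + t • u - (x + t • b), u⟫ ≤ 0 := hsupp _ (hmem x hx u hu.le)
  have h1' : t * (1 - ⟪b, u⟫) ≤ 0 := by
    have : x + t • u - (x + t • b) = t • (u - b) := by module
    rw [this, real_inner_smul_left, inner_sub_left, real_inner_self_eq_norm_sq, hu] at h1
    nlinarith
  have hbu : 1 ≤ ⟪b, u⟫ := by nlinarith
  have hcs : ⟪b, u⟫ ≤ ‖b‖ * ‖u‖ := real_inner_le_norm b u
  have hnb : ‖b‖ = 1 := by nlinarith
  have heq : ⟪b, u⟫ = ‖b‖ * ‖u‖ := by nlinarith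
  have hb_eq : b = u := by
    have := (inner_eq_norm_mul_iff_real (x := b) (y := u)).mp heq
    rw [hnb, hu, one_smul, one_smul] at this
    exact this
  refine ⟨hb_eq, fun z hz => ?_⟩
  have h2 : ⟪z + t • u - (x + t • b), u⟫ ≤ 0 := hsupp _ (hmem z hz u hu.le)
  rw [hb_eq] at h2
  have : z + t • u - (x + t • u) = z - x := by module
  rwa [this] at h2
end

section
/- Let E be a finite-dimensional real inner product space, L a linear subspace (Submodule ℝ) of E, and K ⊆ E a nonempty compact set with K ⊆ L (as a set). Then for every ρ ≥ 0, the closed thickening Metric.cthickening ρ K is contained in the Minkowski sum K + (Metric.closedBall 0 ρ ∩ L) + (Metric.closedBall 0 ρ ∩ Lᗮ), where Lᗮ is the orthogonal complement of L. -/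
open Pointwise Metric

theorem Submodule.closedBall_zero_subset_add_orthogonal {𝕜 E : Type*} [RCLike 𝕜]
    [NormedAddCommGroup E] [InnerProductSpace 𝕜 E] (K : Submodule 𝕜 E)
    [K.HasOrthogonalProjection] (r : ℝ) :
    closedBall (0 : E) r ⊆ (closedBall 0 r ∩ (K : Set E)) + (closedBall 0 r ∩ (Kᗮ : Set E)) := by
  intro u hu
  rw [mem_closedBall_zero_iff] at hu
  exact ⟨K.starProjection u,
    ⟨mem_closedBall_zero_iff.2 ((K.norm_starProjection_apply_le u).trans hu),
      K.starProjection_apply_mem u⟩,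
    Kᗮ.starProjection u,
    ⟨mem_closedBall_zero_iff.2 ((Kᗮ.norm_starProjection_apply_le u).trans hu),
      Kᗮ.starProjection_apply_mem u⟩,
    K.starProjection_add_starProjection_orthogonal u⟩

theorem cthickening_subset_minkowski_decomposition_general
    {E : Type*} [NormedAddCommGroup E] [InnerProductSpace ℝ E]
    [FiniteDimensional ℝ E]
    (L : Submodule ℝ E) (K : Set E)
    (hKc : IsCompact K)
    (ρ : ℝ) (hρ : 0 ≤ ρ) :
    Metric.cthickening ρ K ⊆
      K + (Metric.closedBall 0 ρ ∩ (L : Set E))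
        + (Metric.closedBall 0 ρ ∩ (Lᗮ : Set E)) := by
  rw [← hKc.add_closedBall_zero hρ, add_assoc]
  exact Set.add_subset_add_left (L.closedBall_zero_subset_add_orthogonal ρ)

theorem cthickening_subset_minkowski_decomposition
    {E : Type*} [NormedAddCommGroup E] [InnerProductSpace ℝ E]
    [FiniteDimensional ℝ E]
    (L : Submodule ℝ E) (K : Set E)
    (hKne : K.Nonempty) (hKc : IsCompact K) (hKL : K ⊆ (L : Set E))
    (ρ : ℝ) (hρ : 0 ≤ ρ) :
    Metric.cthickening ρ K ⊆
      K + (Metric.closedBall 0 ρ ∩ (L : Set E))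
        + (Metric.closedBall 0 ρ ∩ (Lᗮ : Set E)) :=
  cthickening_subset_minkowski_decomposition_general L K hKc ρ hρ
end

section
/- Let E be a real inner product space and let K ⊆ E be a nonempty compact set that is origin-symmetric (x ∈ K implies −x ∈ K). For u ∈ E write h_K(u) := sSup { ⟪x, u⟫ : x ∈ K }. Let c > 0 and let β, β₁ be real numbers with 0 < β₁ ≤ β < π/2. Suppose ξ, η ∈ E satisfy h_K(ξ) ≥ 2c and h_K(η) ≤ c · tan β₁. Then h_K((sin β) • ξ + (cos β) • η) ≥ c · sin β₁. -/
open RealInnerProductSpace Real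

theorem belt_support_lower_bound
    {E : Type*} [NormedAddCommGroup E] [InnerProductSpace ℝ E]
    (K : Set E) (hKne : K.Nonempty) (hKc : IsCompact K)
    (hKsym : ∀ x ∈ K, -x ∈ K)
    (c : ℝ) (hc : 0 < c)
    (β β₁ : ℝ) (hβ₁ : 0 < β₁) (hββ₁ : β₁ ≤ β) (hβ : β < π / 2)
    (ξ η : E)
    (hξ : 2 * c ≤ sSup {r : ℝ | ∃ x ∈ K, ⟪x, ξ⟫ = r})
    (hη : sSup {r : ℝ | ∃ x ∈ K, ⟪x, η⟫ = r} ≤ c * tan β₁) :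
    c * sin β₁ ≤ sSup {r : ℝ | ∃ x ∈ K, ⟪x, (sin β) • ξ + (cos β) • η⟫ = r} := by
  have hβ₁lt : β₁ < π / 2 := lt_of_le_of_lt hββ₁ hβ
  have himg : ∀ u : E, {r : ℝ | ∃ x ∈ K, ⟪x, u⟫ = r} = (fun x => ⟪x, u⟫) '' K := by
    intro u; ext r; simp [Set.mem_image, eq_comm]
  have hcont : ∀ u : E, Continuous fun x : E => ⟪x, u⟫ :=
    fun u => continuous_id.inner continuous_const
  have hbdd : ∀ u : E, BddAbove {r : ℝ | ∃ x ∈ K, ⟪x, u⟫ = r} := by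
    intro u; rw [himg u]; exact (hKc.image (hcont u)).bddAbove
  -- sup for ξ is attained
  obtain ⟨x₀, hx₀K, hx₀max⟩ := hKc.exists_isMaxOn hKne ((hcont ξ).continuousOn)
  have hsupξ : sSup {r : ℝ | ∃ x ∈ K, ⟪x, ξ⟫ = r} = ⟪x₀, ξ⟫ := by
    apply le_antisymm
    · refine csSup_le ⟨⟪x₀, ξ⟫, x₀, hx₀K, rfl⟩ ?_
      rintro r ⟨x, hxK, rfl⟩
      exact hx₀max hxK
    · exact le_csSup (hbdd ξ) ⟨x₀, hx₀K, rfl⟩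
  -- ⟪x₀, η⟫ ≥ - h_K(η)
  have hηx₀ : -(c * tan β₁) ≤ ⟪x₀, η⟫ := by
    have h1 : ⟪-x₀, η⟫ ≤ sSup {r : ℝ | ∃ x ∈ K, ⟪x, η⟫ = r} :=
      le_csSup (hbdd η) ⟨-x₀, hKsym x₀ hx₀K, rfl⟩
    have := h1.trans hη
    rw [inner_neg_left] at this
    linarith
  have key : sin β * ⟪x₀, ξ⟫ + cos β * ⟪x₀, η⟫ ≤
      sSup {r : ℝ | ∃ x ∈ K, ⟪x, (sin β) • ξ + (cos β) • η⟫ = r} := by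
    apply le_csSup (hbdd _)
    exact ⟨x₀, hx₀K, by simp [inner_add_right, inner_smul_right]⟩
  have hsinβ : sin β₁ ≤ sin β :=
    Real.sin_le_sin_of_le_of_le_pi_div_two (by linarith [Real.pi_pos]) hβ.le hββ₁
  have hcosβ : cos β ≤ cos β₁ :=
    Real.cos_le_cos_of_nonneg_of_le_pi hβ₁.le (by linarith [Real.pi_pos]) hββ₁
  have hsinβ₁pos : 0 < sin β₁ := Real.sin_pos_of_pos_of_lt_pi hβ₁ (by linarith [Real.pi_pos])
  have hcosβ₁pos : 0 < cos β₁ := Real.cos_pos_of_mem_Ioo ⟨by linarith, hβ₁lt⟩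
  have hcosβpos : 0 < cos β := Real.cos_pos_of_mem_Ioo ⟨by linarith [Real.pi_pos], hβ⟩
  have htan : cos β₁ * tan β₁ = sin β₁ := by
    rw [Real.tan_eq_sin_div_cos]; field_simp
  have hξx₀ : 2 * c ≤ ⟪x₀, ξ⟫ := hsupξ ▸ hξ
  -- main estimate
  have h1 : sin β₁ * (2 * c) ≤ sin β * ⟪x₀, ξ⟫ := by
    have : 0 ≤ ⟪x₀, ξ⟫ := le_trans (by positivity) hξx₀
    nlinarith
  have h2 : -(cos β₁ * (c * tan β₁)) ≤ cos β * ⟪x₀, η⟫ := by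
    have htanpos : 0 < tan β₁ := Real.tan_pos_of_pos_of_lt_pi_div_two hβ₁ hβ₁lt
    rcases le_or_gt 0 (⟪x₀, η⟫ : ℝ) with h | h
    · nlinarith
    · nlinarith
  have : c * sin β₁ ≤ sin β * ⟪x₀, ξ⟫ + cos β * ⟪x₀, η⟫ := by nlinarith
  linarith [key]
end
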